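/- arXiv:2604.20339 — 2 statements merged into one kernel-verified Lean document; each statement's English description precedes it below -/
import Mathlib

section
/- (Integration by parts and dissipativity for the degenerate operator) For every u∈D(A) the function √(1−x²)·u′ belongs to L²(−1,1) (so D(A)⊆V), and ∫_{−1}^{1} ((1−x²)u′)′(x)·u(x) dx = −∫_{−1}^{1} (1−x²)·u′(x)² dx; in particular ∫_{−1}^{1} (Au)(x)·u(x) dx ≤ 0. -/
/-! The flux `F = (1 - x²) u'` is the primitive of `Au ∈ L²(-1, 1)` vanishing at both ends, so
Cauchy–Schwarz on `[-1, x]` and on `[x, 1]` gives `F(x)² ≤ ‖Au‖² (1 - x²)`. Hence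
`(1 - x²) u'² ≤ ‖Au‖²` is bounded, `|u'| ≤ ‖Au‖ / √(1 - x²) = ‖Au‖ arcsin'` keeps `u`
bounded, and the boundary terms `F u` of the integration by parts on `[-x, x]` are `O(√(1 - x²))`,
so they vanish as `x → 1`. -/

open MeasureTheory Set Filter

noncomputable section

/-- `u` belongs to the domain `D(A)` of the degenerate operator `A u = ((1-x²)u')'` on
`I = (-1,1)`: `u ∈ L²(I)` is locally absolutely continuous on `I` with a.e. derivative `u'`,
and `x ↦ (1-x²)u'(x)` extends to an absolutely continuous function on `[-1,1]` vanishing at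
`x = ±1`, whose a.e. derivative `Au` belongs to `L²(I)`. -/
structure MemDA (u u' Au : ℝ → ℝ) : Prop where
  sq_int : IntegrableOn (fun x => u x ^ 2) (Ioo (-1:ℝ) 1)
  locAC : ∀ a b : ℝ, a ∈ Ioo (-1:ℝ) 1 → b ∈ Ioo (-1:ℝ) 1 →
      u b - u a = ∫ t in a..b, u' t
  deriv_intble : ∀ a b : ℝ, a ∈ Ioo (-1:ℝ) 1 → b ∈ Ioo (-1:ℝ) 1 →
      IntervalIntegrable u' volume a b
  Au_intble : IntervalIntegrable Au volume (-1) 1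
  Au_sq_int : IntegrableOn (fun x => Au x ^ 2) (Ioo (-1:ℝ) 1)
  flux : ∀ x ∈ Ioo (-1:ℝ) 1, (1 - x ^ 2) * u' x = ∫ t in (-1:ℝ)..x, Au t
  flux_one : (∫ t in (-1:ℝ)..(1:ℝ), Au t) = 0

open intervalIntegral Real Topology

-- `∫ (f - s)² ≥ 0` for every `s`: a quadratic in `s` with nonpositive discriminant.
theorem sq_intervalIntegral_le_mul_intervalIntegral_sq {f : ℝ → ℝ} {a b : ℝ} (hab : a ≤ b)
    (hf : IntervalIntegrable f volume a b)
    (hf2 : IntervalIntegrable (fun x => f x ^ 2) volume a b) :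
    (∫ x in a..b, f x) ^ 2 ≤ (b - a) * ∫ x in a..b, f x ^ 2 := by
  have hquad : ∀ s : ℝ,
      0 ≤ (b - a) * (s * s) + (-2 * ∫ x in a..b, f x) * s + ∫ x in a..b, f x ^ 2 := by
    intro s
    have h : 0 ≤ ∫ x in a..b, (f x - s) ^ 2 := integral_nonneg hab fun x _ => sq_nonneg _
    have hexp : ∀ x, (f x - s) ^ 2 = (f x ^ 2 - 2 * s * f x) + s ^ 2 := fun x => by ring
    simp_rw [hexp] at h
    rw [integral_add (hf2.sub (hf.const_mul _)) intervalIntegrable_const, integral_sub hf2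
      (hf.const_mul _), intervalIntegral.integral_const_mul, intervalIntegral.integral_const,
      smul_eq_mul] at h
    linarith
  have := discrim_le_zero hquad
  rw [discrim] at this
  linarith

theorem tendsto_intervalIntegral_neg_self {f : ℝ → ℝ} {c : ℝ} (hc : 0 < c)
    (hf : IntervalIntegrable f volume (-c) c) :
    Tendsto (fun x => ∫ t in -x..x, f t) (𝓝[<] c) (𝓝 (∫ t in -c..c, f t)) := by
  have hsub : Icc 0 c ⊆ uIcc (-c) c := by
    rw [uIcc_of_le (by linarith)]; exact Icc_subset_Icc (by linarith) le_rfl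
  have hneg : MapsTo (fun x => -x) (Icc 0 c) (uIcc (-c) c) := by
    rw [uIcc_of_le (by linarith)]; exact fun x hx => ⟨by linarith [hx.2], by linarith [hx.1]⟩
  have hΦ := continuousOn_primitive_interval' hf left_mem_uIcc
  have hcont : ContinuousOn (fun x => (∫ t in -c..x, f t) - ∫ t in -c..-x, f t) (Icc 0 c) :=
    (hΦ.mono hsub).sub (hΦ.comp continuousOn_neg hneg)
  have hlim := ((hcont c (right_mem_Icc.2 hc.le)).tendsto).mono_left
    (nhdsWithin_le_of_mem (Icc_mem_nhdsLT hc))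
  rw [integral_same, sub_zero] at hlim
  refine hlim.congr' ?_
  filter_upwards [Icc_mem_nhdsLT hc] with x hx
  exact integral_interval_sub_left (hf.mono_set (uIcc_subset_uIcc left_mem_uIcc (hsub hx)))
    (hf.mono_set (uIcc_subset_uIcc left_mem_uIcc (hneg hx)))

theorem one_sub_sq_pos_of_mem_Ioo {x : ℝ} (hx : x ∈ Ioo (-1:ℝ) 1) : 0 < 1 - x ^ 2 := by
  nlinarith [hx.1, hx.2]

namespace MemDA

variable {u u' Au : ℝ → ℝ}

theorem intervalIntegrable_sq (hu : MemDA u u' Au) :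
    IntervalIntegrable (fun x => Au x ^ 2) volume (-1) 1 := by
  rw [intervalIntegrable_iff_integrableOn_Ioo_of_le (by norm_num)]
  exact hu.Au_sq_int

theorem sq_flux_le (hu : MemDA u u' Au) {x : ℝ} (hx : x ∈ Ioo (-1:ℝ) 1) :
    ((1 - x ^ 2) * u' x) ^ 2 ≤ (∫ t in (-1:ℝ)..1, Au t ^ 2) * (1 - x ^ 2) := by
  set M := ∫ t in (-1:ℝ)..1, Au t ^ 2
  have hx' : x ∈ uIcc (-1:ℝ) 1 := by rw [uIcc_of_le (by norm_num)]; exact Ioo_subset_Icc_self hx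
  have hAu {a b} (ha : a ∈ uIcc (-1:ℝ) 1) (hb : b ∈ uIcc (-1:ℝ) 1) :=
    hu.Au_intble.mono_set (uIcc_subset_uIcc ha hb)
  have hAu2 {a b} (ha : a ∈ uIcc (-1:ℝ) 1) (hb : b ∈ uIcc (-1:ℝ) 1) :=
    hu.intervalIntegrable_sq.mono_set (uIcc_subset_uIcc ha hb)
  have hM {a b} (ha : -1 ≤ a) (hab : a ≤ b) (hb : b ≤ 1) : ∫ t in a..b, Au t ^ 2 ≤ M :=
    integral_mono_interval ha hab hb (Eventually.of_forall fun _ => sq_nonneg _)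
      hu.intervalIntegrable_sq
  have hsplit : (∫ t in (-1:ℝ)..x, Au t) = -∫ t in x..1, Au t := by
    have := integral_add_adjacent_intervals (hAu left_mem_uIcc hx') (hAu hx' right_mem_uIcc)
    linarith [hu.flux_one]
  have hleft : ((1 - x ^ 2) * u' x) ^ 2 ≤ (x + 1) * M := by
    rw [hu.flux x hx]
    calc _ ≤ (x - -1) * ∫ t in (-1:ℝ)..x, Au t ^ 2 :=
          sq_intervalIntegral_le_mul_intervalIntegral_sq hx.1.le (hAu left_mem_uIcc hx')
            (hAu2 left_mem_uIcc hx')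
      _ ≤ (x + 1) * M := by
          rw [sub_neg_eq_add]
          exact mul_le_mul_of_nonneg_left (hM le_rfl hx.1.le hx.2.le) (by linarith [hx.1])
  have hright : ((1 - x ^ 2) * u' x) ^ 2 ≤ (1 - x) * M := by
    rw [hu.flux x hx, hsplit, neg_sq]
    calc _ ≤ (1 - x) * ∫ t in x..1, Au t ^ 2 :=
          sq_intervalIntegral_le_mul_intervalIntegral_sq hx.2.le (hAu hx' right_mem_uIcc)
            (hAu2 hx' right_mem_uIcc)
      _ ≤ (1 - x) * M :=
          mul_le_mul_of_nonneg_left (hM hx.1.le hx.2.le le_rfl) (by linarith [hx.2])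
  have hM0 : 0 ≤ M := integral_nonneg (by norm_num) fun _ _ => sq_nonneg _
  rcases le_total x 0 with h | h
  · nlinarith [mul_nonneg (mul_nonneg hM0 (neg_nonneg.2 h)) (by linarith [hx.1] : 0 ≤ 1 + x)]
  · nlinarith [mul_nonneg (mul_nonneg hM0 h) (by linarith [hx.2] : 0 ≤ 1 - x)]

theorem one_sub_sq_mul_deriv_sq_le (hu : MemDA u u' Au) {x : ℝ} (hx : x ∈ Ioo (-1:ℝ) 1) :
    (1 - x ^ 2) * u' x ^ 2 ≤ ∫ t in (-1:ℝ)..1, Au t ^ 2 := by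
  have h := hu.sq_flux_le hx
  rw [mul_pow, sq (1 - x ^ 2), mul_assoc, mul_comm _ (1 - x ^ 2)] at h
  exact le_of_mul_le_mul_left h (one_sub_sq_pos_of_mem_Ioo hx)

theorem abs_deriv_le (hu : MemDA u u' Au) {x : ℝ} (hx : x ∈ Ioo (-1:ℝ) 1) :
    |u' x| ≤ √(∫ t in (-1:ℝ)..1, Au t ^ 2) * (1 / √(1 - x ^ 2)) := by
  have h := one_sub_sq_pos_of_mem_Ioo hx
  rw [mul_one_div, ← sqrt_div' _ h.le]
  exact abs_le_sqrt ((le_div_iff₀ h).2 (by linarith [hu.one_sub_sq_mul_deriv_sq_le hx]))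

theorem continuousOn_deriv (hu : MemDA u u' Au) : ContinuousOn u' (Ioo (-1:ℝ) 1) := by
  have hF : ContinuousOn (fun x => ∫ t in (-1:ℝ)..x, Au t) (Ioo (-1:ℝ) 1) := by
    have := continuousOn_primitive_interval' hu.Au_intble left_mem_uIcc
    exact this.mono (by rw [uIcc_of_le (by norm_num)]; exact Ioo_subset_Icc_self)
  refine (hF.div (by fun_prop) fun x hx => (one_sub_sq_pos_of_mem_Ioo hx).ne').congr
    fun x hx => ?_
  rw [Pi.div_apply, ← hu.flux x hx, mul_div_cancel_left₀ _ (one_sub_sq_pos_of_mem_Ioo hx).ne']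

theorem hasDerivAt (hu : MemDA u u' Au) {x : ℝ} (hx : x ∈ Ioo (-1:ℝ) 1) :
    HasDerivAt u (u' x) x := by
  have h0 : (0:ℝ) ∈ Ioo (-1:ℝ) 1 := by norm_num
  have hprim : HasDerivAt (fun y => u 0 + ∫ t in (0:ℝ)..y, u' t) (u' x) x :=
    (integral_hasDerivAt_right (hu.deriv_intble 0 x h0 hx)
      (hu.continuousOn_deriv.stronglyMeasurableAtFilter isOpen_Ioo x hx)
      (hu.continuousOn_deriv.continuousAt (isOpen_Ioo.mem_nhds hx))).const_add _
  refine hprim.congr_of_eventuallyEq ?_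
  filter_upwards [isOpen_Ioo.mem_nhds hx] with y hy
  linarith [hu.locAC 0 y h0 hy]

theorem abs_sub_apply_zero_le (hu : MemDA u u' Au) {x : ℝ} (hx : x ∈ Ioo (-1:ℝ) 1) :
    |u x - u 0| ≤ √(∫ t in (-1:ℝ)..1, Au t ^ 2) * |arcsin x| := by
  have h0 : (0:ℝ) ∈ Ioo (-1:ℝ) 1 := by norm_num
  have hsub : uIcc 0 x ⊆ Ioo (-1:ℝ) 1 := ordConnected_Ioo.uIcc_subset h0 hx
  set C := √(∫ t in (-1:ℝ)..1, Au t ^ 2)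
  have harcsin :
      ∀ t ∈ uIcc 0 x, HasDerivAt (fun t => C * arcsin t) (C * (1 / √(1 - t ^ 2))) t :=
    fun t ht => ((hasDerivAt_arcsin (hsub ht).1.ne' (hsub ht).2.ne).const_mul C)
  have hbound : IntervalIntegrable (fun t => C * (1 / √(1 - t ^ 2))) volume 0 x :=
    (continuousOn_const.mul (continuousOn_const.div (by fun_prop)
      fun t ht => (sqrt_pos.2 (one_sub_sq_pos_of_mem_Ioo (hsub ht))).ne')).intervalIntegrable
  have hle : ‖∫ t in (0:ℝ)..x, u' t‖ ≤ |∫ t in (0:ℝ)..x, C * (1 / √(1 - t ^ 2))| :=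
    norm_integral_le_abs_of_norm_le ((ae_restrict_mem measurableSet_uIoc).mono
      fun t ht => hu.abs_deriv_le (hsub (uIoc_subset_uIcc ht))) hbound
  rw [hu.locAC 0 x h0 hx, ← norm_eq_abs]
  rwa [integral_eq_sub_of_hasDerivAt harcsin hbound, arcsin_zero, mul_zero, sub_zero, abs_mul,
    abs_of_nonneg (sqrt_nonneg _)] at hle

theorem abs_le_of_mem_Ioo (hu : MemDA u u' Au) {x : ℝ} (hx : x ∈ Ioo (-1:ℝ) 1) :
    |u x| ≤ |u 0| + √(∫ t in (-1:ℝ)..1, Au t ^ 2) * (π / 2) := by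
  have h := hu.abs_sub_apply_zero_le hx
  have harcsin : |arcsin x| ≤ π / 2 :=
    _root_.abs_le.2 ⟨neg_pi_div_two_le_arcsin x, arcsin_le_pi_div_two x⟩
  have hC := sqrt_nonneg (∫ t in (-1:ℝ)..1, Au t ^ 2)
  nlinarith [abs_sub_abs_le_abs_sub (u x) (u 0)]

theorem contDiffOn (hu : MemDA u u' Au) : ContDiffOn ℝ 1 u (Ioo (-1:ℝ) 1) := by
  rw [show (1 : WithTop ℕ∞) = 0 + 1 from rfl, contDiffOn_succ_iff_deriv_of_isOpen isOpen_Ioo,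
    contDiffOn_zero]
  refine ⟨fun x hx => (hu.hasDerivAt hx).differentiableAt.differentiableWithinAt,
    by simp, hu.continuousOn_deriv.congr fun x hx => (hu.hasDerivAt hx).deriv⟩

theorem intervalIntegral_mul_eq (hu : MemDA u u' Au) {a b : ℝ} (ha : a ∈ Ioo (-1:ℝ) 1)
    (hb : b ∈ Ioo (-1:ℝ) 1) :
    ∫ x in a..b, Au x * u x = (1 - b ^ 2) * u' b * u b - (1 - a ^ 2) * u' a * u a
      - ∫ x in a..b, (1 - x ^ 2) * u' x ^ 2 := by
  have hsub : uIcc a b ⊆ Ioo (-1:ℝ) 1 := ordConnected_Ioo.uIcc_subset ha hb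
  have hsub' : uIcc a b ⊆ uIcc (-1:ℝ) 1 := by
    rw [uIcc_of_le (by norm_num : (-1:ℝ) ≤ 1)]; exact hsub.trans Ioo_subset_Icc_self
  set G := fun y => ∫ t in (-1:ℝ)..y, Au t
  have hG : AbsolutelyContinuousOnInterval G a b :=
    (hu.Au_intble.absolutelyContinuousOnInterval_intervalIntegral left_mem_uIcc).mono hsub'
  have hAC : AbsolutelyContinuousOnInterval u a b :=
    (hu.contDiffOn.mono hsub).absolutelyContinuousOnInterval
  have hderivG : ∫ x in a..b, Au x * u x = ∫ x in a..b, u x * deriv G x := by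
    refine integral_congr_ae ?_
    filter_upwards [hu.Au_intble.ae_hasDerivAt_integral] with x hx hxab
    rw [(hx (hsub' (uIoc_subset_uIcc hxab)) (-1) left_mem_uIcc).deriv, mul_comm]
  have hderivu : ∫ x in a..b, deriv u x * G x = ∫ x in a..b, (1 - x ^ 2) * u' x ^ 2 := by
    refine integral_congr fun x hx => ?_
    simp only [G]
    rw [(hu.hasDerivAt (hsub hx)).deriv, ← hu.flux x (hsub hx)]
    ring
  rw [hderivG, hAC.integral_mul_deriv_eq_deriv_mul hG, hderivu]
  simp only [G]
  rw [← hu.flux a ha, ← hu.flux b hb]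
  ring

theorem integrableOn_one_sub_sq_mul_deriv_sq (hu : MemDA u u' Au) :
    IntegrableOn (fun x => (1 - x ^ 2) * u' x ^ 2) (Ioo (-1:ℝ) 1) := by
  have hcont : ContinuousOn (fun x => (1 - x ^ 2) * u' x ^ 2) (Ioo (-1:ℝ) 1) :=
    (by fun_prop : Continuous fun x : ℝ => 1 - x ^ 2).continuousOn.mul
      (hu.continuousOn_deriv.pow 2)
  refine Integrable.mono' (integrableOn_const (C := ∫ t in (-1:ℝ)..1, Au t ^ 2)
    measure_Ioo_lt_top.ne) (hcont.aestronglyMeasurable measurableSet_Ioo) ?_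
  filter_upwards [ae_restrict_mem measurableSet_Ioo] with x hx
  rw [norm_of_nonneg (mul_nonneg (one_sub_sq_pos_of_mem_Ioo hx).le (sq_nonneg _))]
  exact hu.one_sub_sq_mul_deriv_sq_le hx

theorem integrableOn_mul (hu : MemDA u u' Au) :
    IntegrableOn (fun x => Au x * u x) (Ioo (-1:ℝ) 1) := by
  refine Integrable.mul_bdd (c := |u 0| + √(∫ t in (-1:ℝ)..1, Au t ^ 2) * (π / 2))
    (hu.Au_intble.1.mono_set Ioo_subset_Ioc_self)
    (hu.contDiffOn.continuousOn.aestronglyMeasurable measurableSet_Ioo) ?_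
  filter_upwards [ae_restrict_mem measurableSet_Ioo] with x hx
  exact hu.abs_le_of_mem_Ioo hx

theorem abs_flux_mul_le (hu : MemDA u u' Au) {x : ℝ} (hx : x ∈ Ioo (-1:ℝ) 1) :
    |(1 - x ^ 2) * u' x * u x| ≤ √(∫ t in (-1:ℝ)..1, Au t ^ 2) *
      (|u 0| + √(∫ t in (-1:ℝ)..1, Au t ^ 2) * (π / 2)) * √(1 - x ^ 2) := by
  have hflux : |(1 - x ^ 2) * u' x| ≤ √(∫ t in (-1:ℝ)..1, Au t ^ 2) * √(1 - x ^ 2) := by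
    rw [← sqrt_mul (integral_nonneg (by norm_num) fun _ _ => sq_nonneg _)]
    exact abs_le_sqrt (hu.sq_flux_le hx)
  rw [abs_mul, mul_right_comm]
  exact mul_le_mul hflux (hu.abs_le_of_mem_Ioo hx) (abs_nonneg _) (by positivity)

theorem tendsto_flux_mul_sub_flux_mul_neg (hu : MemDA u u' Au) :
    Tendsto (fun x => (1 - x ^ 2) * u' x * u x - (1 - (-x) ^ 2) * u' (-x) * u (-x))
      (𝓝[<] 1) (𝓝 0) := by
  obtain ⟨C, hC⟩ : ∃ C, ∀ x ∈ Ioo (-1:ℝ) 1, |(1 - x ^ 2) * u' x * u x| ≤ C * √(1 - x ^ 2) :=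
    ⟨_, fun x hx => hu.abs_flux_mul_le hx⟩
  have hlim : Tendsto (fun x : ℝ => 2 * C * √(1 - x ^ 2)) (𝓝[<] 1) (𝓝 0) := by
    have : Tendsto (fun x : ℝ => 2 * C * √(1 - x ^ 2)) (𝓝 1) (𝓝 (2 * C * √(1 - 1 ^ 2))) :=
      (by fun_prop : Continuous fun x : ℝ => 2 * C * √(1 - x ^ 2)).tendsto 1
    simpa using this.mono_left nhdsWithin_le_nhds
  refine squeeze_zero_norm' ?_ hlim
  filter_upwards [Ioo_mem_nhdsLT (by norm_num : (-1:ℝ) < 1)] with x hx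
  have hx' : -x ∈ Ioo (-1:ℝ) 1 := ⟨by linarith [hx.2], by linarith [hx.1]⟩
  have h := hC (-x) hx'
  rw [neg_sq] at h ⊢
  rw [norm_eq_abs]
  linarith [hC x hx, abs_sub ((1 - x ^ 2) * u' x * u x) ((1 - x ^ 2) * u' (-x) * u (-x))]

theorem intervalIntegral_mul_eq_neg (hu : MemDA u u' Au) :
    ∫ x in (-1:ℝ)..1, Au x * u x = -∫ x in (-1:ℝ)..1, (1 - x ^ 2) * u' x ^ 2 := by
  have hIoo {f : ℝ → ℝ} : IntegrableOn f (Ioo (-1:ℝ) 1) → IntervalIntegrable f volume (-1) 1 :=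
    (intervalIntegrable_iff_integrableOn_Ioo_of_le (by norm_num)).2
  have hparts : ∀ᶠ x in 𝓝[<] (1:ℝ), ∫ t in -x..x, Au t * u t =
      ((1 - x ^ 2) * u' x * u x - (1 - (-x) ^ 2) * u' (-x) * u (-x))
        - ∫ t in -x..x, (1 - t ^ 2) * u' t ^ 2 := by
    filter_upwards [Ioo_mem_nhdsLT (by norm_num : (-1:ℝ) < 1)] with x hx
    exact hu.intervalIntegral_mul_eq ⟨by linarith [hx.2], by linarith [hx.1]⟩ hx
  have hlim := (hu.tendsto_flux_mul_sub_flux_mul_neg.sub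
    (tendsto_intervalIntegral_neg_self one_pos (hIoo hu.integrableOn_one_sub_sq_mul_deriv_sq))
    ).congr' (hparts.mono fun _ h => h.symm)
  rw [tendsto_nhds_unique (tendsto_intervalIntegral_neg_self one_pos (hIoo hu.integrableOn_mul))
    hlim, zero_sub]

end MemDA

/-- Integration by parts and dissipativity for the degenerate operator: for `u ∈ D(A)`,
`√(1-x²) u' ∈ L²(-1,1)` (so `D(A) ⊆ V`), `∫ Au · u = - ∫ (1-x²) u'²`, and `∫ Au · u ≤ 0`. -/
theorem DA_integration_by_parts (u u' Au : ℝ → ℝ) (hu : MemDA u u' Au) :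
    IntegrableOn (fun x => (1 - x ^ 2) * u' x ^ 2) (Ioo (-1:ℝ) 1) ∧
    (∫ x in Ioo (-1:ℝ) 1, Au x * u x)
      = -∫ x in Ioo (-1:ℝ) 1, (1 - x ^ 2) * u' x ^ 2 ∧
    (∫ x in Ioo (-1:ℝ) 1, Au x * u x) ≤ 0 := by
  have hIoo (f : ℝ → ℝ) : ∫ x in Ioo (-1:ℝ) 1, f x = ∫ x in (-1:ℝ)..1, f x := by
    rw [integral_of_le (by norm_num), integral_Ioc_eq_integral_Ioo]
  have heq : (∫ x in Ioo (-1:ℝ) 1, Au x * u x)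
      = -∫ x in Ioo (-1:ℝ) 1, (1 - x ^ 2) * u' x ^ 2 := by
    rw [hIoo, hIoo]; exact hu.intervalIntegral_mul_eq_neg
  have hnonneg : 0 ≤ ∫ x in Ioo (-1:ℝ) 1, (1 - x ^ 2) * u' x ^ 2 :=
    setIntegral_nonneg measurableSet_Ioo fun x hx =>
      mul_nonneg (one_sub_sq_pos_of_mem_Ioo hx).le (sq_nonneg _)
  exact ⟨hu.integrableOn_one_sub_sq_mul_deriv_sq, heq, heq ▸ neg_nonpos.2 hnonneg⟩
end
end

section
/- (An unbounded function in V) Let β∈(1/4,1/2) and define u:(−1,1)→ℝ by u(x)=|ln(1−x²)|^β for x≠0 and u(0)=0. Then u∈L²(−1,1), u is locally absolutely continuous on (−1,1) with ∫_{−1}^{1}(1−x²)·u′(x)² dx < ∞ (hence u∈V), and u(x)→+∞ as x→1⁻ and as x→(−1)⁺; in particular u is not bounded, so V is not contained in L^∞(−1,1). -/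
open MeasureTheory Set Filter

noncomputable section

/-- `u` belongs to the weighted space `V` on `I = (-1,1)`: it is square integrable on `I`,
locally absolutely continuous on `I` with a.e. derivative `u'`, and `√(1-x²)·u'` is square
integrable on `I`. -/
structure MemV (u u' : ℝ → ℝ) : Prop where
  sq_int : IntegrableOn (fun x => u x ^ 2) (Ioo (-1:ℝ) 1)
  locAC : ∀ a b : ℝ, a ∈ Ioo (-1:ℝ) 1 → b ∈ Ioo (-1:ℝ) 1 →
      u b - u a = ∫ t in a..b, u' t
  deriv_intble : ∀ a b : ℝ, a ∈ Ioo (-1:ℝ) 1 → b ∈ Ioo (-1:ℝ) 1 →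
      IntervalIntegrable u' volume a b
  wsq_int : IntegrableOn (fun x => (1 - x ^ 2) * u' x ^ 2) (Ioo (-1:ℝ) 1)

/-!
Write `ℓ x = |log (1 - x²)| = -log (1 - x²) ≥ x²`, so that `u = ℓ ^ β`.
Since `2β ≤ 1`, `u² ≤ 1 + ℓ`, and `log (1 - x²)` is integrable.
On each side of `0` the derivative `u'` has a fixed sign, so it is integrable and the
fundamental theorem of calculus applies across `0`, where `u` is continuous.
The weight `(1 - x²) u'² = 4β² x² ℓ^(2β-2) / (1 - x²)` is dominated by a multiple of
`(ℓ ^ s / s)' = ℓ^(s-1) · 2x / (1 - x²)`: on `[0, 1/2]` with `s = 2β - 1/2 > 0`, using `x² ≤ ℓ`,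
and on `[1/2, 1]` with `s = 2β - 1 < 0`, where `ℓ ^ s → 0` at `1`.
Finally `u → ∞` at `±1` because `ℓ` does.
-/

open Topology

namespace UnboundedInV

def ℓ (x : ℝ) : ℝ := |Real.log (1 - x ^ 2)|

def u (β x : ℝ) : ℝ := ℓ x ^ β

def u' (β x : ℝ) : ℝ := if x = 0 then 0 else β * ℓ x ^ (β - 1) * (2 * x / (1 - x ^ 2))

theorem intervalIntegrable_of_norm_le_deriv {E : Type*} [NormedAddCommGroup E] {f : ℝ → E}
    {g g' : ℝ → ℝ} {a b : ℝ} (hab : a ≤ b)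
    (hf : AEStronglyMeasurable f (volume.restrict (Ioc a b)))
    (hcont : ContinuousOn g (Icc a b)) (hderiv : ∀ x ∈ Ioo a b, HasDerivAt g (g' x) x)
    (hle : ∀ x ∈ Ioo a b, ‖f x‖ ≤ g' x) : IntervalIntegrable f volume a b := by
  have hg' : IntegrableOn g' (Ioc a b) := intervalIntegral.integrableOn_deriv_of_nonneg hcont
    hderiv fun x hx => (norm_nonneg _).trans (hle x hx)
  rw [intervalIntegrable_iff_integrableOn_Ioc_of_le hab]
  refine hg'.mono' hf ?_
  rw [← Measure.restrict_congr_set Ioo_ae_eq_Ioc]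
  filter_upwards [ae_restrict_mem measurableSet_Ioo] using hle

theorem intervalIntegrable_of_even {E : Type*} [NormedAddCommGroup E] {f : ℝ → E}
    (hf : ∀ x, f (-x) = f x) {a : ℝ} (h : IntervalIntegrable f volume 0 a) :
    IntervalIntegrable f volume (-a) a := by
  have h' := (IntervalIntegrable.iff_comp_neg (f := f)).mp h
  simp only [hf, neg_zero] at h'
  exact h'.symm.trans h

theorem rpow_le_one_add {t p : ℝ} (ht : 0 ≤ t) (hp0 : 0 ≤ p) (hp1 : p ≤ 1) : t ^ p ≤ 1 + t := by
  rcases le_total t 1 with h | h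
  · linarith [Real.rpow_le_one ht h hp0]
  · linarith [Real.rpow_le_self_of_one_le h hp1]

section ell

variable {x : ℝ}

theorem one_sub_sq_pos (hx : x ∈ Ioo (-1 : ℝ) 1) : 0 < 1 - x ^ 2 := by
  nlinarith [hx.1, hx.2]

theorem ℓ_nonneg (x : ℝ) : 0 ≤ ℓ x :=
  abs_nonneg _

theorem ℓ_eq_neg_log (hx : x ∈ Ioo (-1 : ℝ) 1) : ℓ x = -Real.log (1 - x ^ 2) :=
  abs_of_nonpos (Real.log_nonpos (one_sub_sq_pos hx).le (by nlinarith))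

theorem sq_le_ℓ (hx : x ∈ Ioo (-1 : ℝ) 1) : x ^ 2 ≤ ℓ x := by
  rw [ℓ_eq_neg_log hx]
  linarith [Real.log_le_sub_one_of_pos (one_sub_sq_pos hx)]

theorem ℓ_pos (hx : x ∈ Ioo (-1 : ℝ) 1) (hx0 : x ≠ 0) : 0 < ℓ x :=
  (by positivity : 0 < x ^ 2).trans_le (sq_le_ℓ hx)

theorem ℓ_neg (x : ℝ) : ℓ (-x) = ℓ x := by
  simp only [ℓ, neg_sq]

theorem hasDerivAt_ℓ (hx : x ∈ Ioo (-1 : ℝ) 1) : HasDerivAt ℓ (2 * x / (1 - x ^ 2)) x := by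
  have h := (((hasDerivAt_pow 2 x).const_sub 1).log (one_sub_sq_pos hx).ne').neg
  refine (h.congr_deriv (by ring)).congr_of_eventuallyEq ?_
  filter_upwards [isOpen_Ioo.mem_nhds hx] with y hy using ℓ_eq_neg_log hy

theorem hasDerivAt_ℓ_rpow (s : ℝ) (hx : x ∈ Ioo (-1 : ℝ) 1) (hx0 : x ≠ 0) :
    HasDerivAt (fun y => ℓ y ^ s) (s * ℓ x ^ (s - 1) * (2 * x / (1 - x ^ 2))) x :=
  ((hasDerivAt_ℓ hx).rpow_const (Or.inl (ℓ_pos hx hx0).ne')).congr_deriv (by ring)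

theorem continuousOn_ℓ : ContinuousOn ℓ (Ioo (-1 : ℝ) 1) :=
  fun _ hx => (hasDerivAt_ℓ hx).continuousAt.continuousWithinAt

theorem tendsto_ℓ_nhdsLT_one : Tendsto ℓ (𝓝[<] 1) atTop := by
  have h : Tendsto (fun x : ℝ => 1 - x ^ 2) (𝓝[<] 1) (𝓝[>] 0) := by
    refine tendsto_nhdsWithin_iff.2 ⟨?_, ?_⟩
    · exact ((by fun_prop : Continuous fun x : ℝ => 1 - x ^ 2).tendsto' 1 0
        (by norm_num)).mono_left nhdsWithin_le_nhds
    · filter_upwards [Ioo_mem_nhdsLT (by norm_num : (-1 : ℝ) < 1)] using fun _ => one_sub_sq_pos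
  exact tendsto_abs_atBot_atTop.comp (Real.tendsto_log_nhdsGT_zero.comp h)

theorem continuousOn_ℓ_rpow_of_neg {a s : ℝ} (ha : 0 < a) (hs : s < 0) :
    ContinuousOn (fun x => ℓ x ^ s) (Icc a 1) := by
  intro x hx
  rcases hx.2.lt_or_eq with hx1 | rfl
  · have hxI : x ∈ Ioo (-1 : ℝ) 1 := ⟨by linarith [hx.1], hx1⟩
    exact ((hasDerivAt_ℓ_rpow s hxI (ha.trans_le hx.1).ne').continuousAt).continuousWithinAt
  · have h : Tendsto (fun t : ℝ => t ^ s) atTop (𝓝 0) := by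
      simpa using tendsto_rpow_neg_atTop (neg_pos.2 hs)
    have hℓ1 : ℓ 1 ^ s = 0 := by simp [ℓ, Real.zero_rpow hs.ne]
    have h1 : ContinuousWithinAt (fun x => ℓ x ^ s) (Iio 1) 1 := by
      rw [ContinuousWithinAt, hℓ1]
      exact h.comp tendsto_ℓ_nhdsLT_one
    refine (continuousWithinAt_insert_self.2 h1).mono ?_
    rw [Iio_insert]
    exact Icc_subset_Iic_self

theorem intervalIntegrable_ℓ : IntervalIntegrable ℓ volume (-1) 1 :=
  (AnalyticOnNhd.meromorphicOn (fun _ _ => by fun_prop)).intervalIntegrable_log.abs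

end ell

section u

variable {β x : ℝ}

theorem hasDerivAt_u (hx : x ∈ Ioo (-1 : ℝ) 1) (hx0 : x ≠ 0) : HasDerivAt (u β) (u' β x) x := by
  rw [u', if_neg hx0]
  exact hasDerivAt_ℓ_rpow β hx hx0

theorem continuousOn_u (hβ : 0 ≤ β) : ContinuousOn (u β) (Ioo (-1 : ℝ) 1) :=
  continuousOn_ℓ.rpow_const fun _ _ => Or.inr hβ

theorem measurable_u' : Measurable (u' β) :=
  Measurable.ite measurableSet_eq measurable_const (by unfold ℓ; fun_prop)

theorem u'_neg (x : ℝ) : u' β (-x) = -u' β x := by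
  by_cases hx : x = 0
  · simp [u', hx]
  · simp only [u', neg_eq_zero, hx, if_false, ℓ_neg, neg_sq]
    ring

theorem u'_nonneg (hβ : 0 ≤ β) (hx : x ∈ Ico (0 : ℝ) 1) : 0 ≤ u' β x := by
  unfold u'
  split_ifs
  · exact le_rfl
  · have := one_sub_sq_pos ⟨by linarith [hx.1], hx.2⟩
    exact mul_nonneg (mul_nonneg hβ (Real.rpow_nonneg (ℓ_nonneg x) _))
      (div_nonneg (by linarith [hx.1]) this.le)

theorem u'_nonpos (hβ : 0 ≤ β) (hx : x ∈ Ioc (-1 : ℝ) 0) : u' β x ≤ 0 := by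
  simpa [u'_neg] using u'_nonneg hβ (x := -x) ⟨by linarith [hx.2], by linarith [hx.1]⟩

theorem intervalIntegrable_u' (hβ : 0 ≤ β) {a b : ℝ} (ha : a ∈ Ioo (-1 : ℝ) 1)
    (hb : b ∈ Ioo (-1 : ℝ) 1) : IntervalIntegrable (u' β) volume a b := by
  suffices h : ∀ c ∈ Ioo (-1 : ℝ) 1, IntervalIntegrable (u' β) volume 0 c from
    (h a ha).symm.trans (h b hb)
  intro c hc
  have hsub : uIcc 0 c ⊆ Ioo (-1 : ℝ) 1 := ordConnected_Ioo.uIcc_subset (by norm_num) hc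
  have hcont := (continuousOn_u hβ).mono hsub
  rcases le_total 0 c with h0c | hc0
  · refine intervalIntegral.intervalIntegrable_deriv_of_nonneg hcont (fun x hx => ?_)
      fun x hx => ?_
    all_goals rw [min_eq_left h0c, max_eq_right h0c] at hx
    · exact hasDerivAt_u (hsub (Ioo_subset_Icc_self (by simpa [h0c]))) hx.1.ne'
    · exact u'_nonneg hβ ⟨hx.1.le, hx.2.trans hc.2⟩
  · have := intervalIntegral.intervalIntegrable_deriv_of_nonneg (g' := fun x => -u' β x)
      hcont.neg (fun x hx => ?_) fun x hx => ?_
    · simpa only [Pi.neg_def, neg_neg] using this.neg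
    all_goals rw [min_eq_right hc0, max_eq_left hc0] at hx
    · exact (hasDerivAt_u (hsub (Ioo_subset_Icc_self (by simpa [hc0]))) hx.2.ne).neg
    · exact neg_nonneg.2 (u'_nonpos hβ ⟨hc.1.trans hx.1, hx.2.le⟩)

theorem u_sub_u_eq_integral (hβ : 0 ≤ β) {a b : ℝ} (ha : a ∈ Ioo (-1 : ℝ) 1)
    (hb : b ∈ Ioo (-1 : ℝ) 1) : u β b - u β a = ∫ t in a..b, u' β t := by
  have hsub : uIcc a b ⊆ Ioo (-1 : ℝ) 1 := ordConnected_Ioo.uIcc_subset ha hb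
  refine (integral_eq_of_hasDerivAt_off_countable _ _ (countable_singleton 0)
    ((continuousOn_u hβ).mono hsub) (fun x hx => ?_) (intervalIntegrable_u' hβ ha hb)).symm
  exact hasDerivAt_u (hsub (Ioo_subset_Icc_self hx.1)) hx.2

theorem integrableOn_u_sq (hβ0 : 0 ≤ β) (hβ : β ≤ 1 / 2) :
    IntegrableOn (fun x => u β x ^ 2) (Ioo (-1 : ℝ) 1) := by
  have hbound : IntegrableOn (fun x => 1 + ℓ x) (Ioo (-1 : ℝ) 1) :=
    (intervalIntegrable_iff_integrableOn_Ioo_of_le (by norm_num)).1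
      (intervalIntegrable_const.add intervalIntegrable_ℓ)
  refine hbound.mono' (Measurable.aestronglyMeasurable (by unfold u ℓ; fun_prop))
    (ae_of_all _ fun x => ?_)
  calc ‖u β x ^ 2‖ = ℓ x ^ (2 * β) := by
        rw [Real.norm_of_nonneg (sq_nonneg _), u, ← Real.rpow_mul_natCast (ℓ_nonneg x),
          mul_comm]
        norm_cast
    _ ≤ 1 + ℓ x := rpow_le_one_add (ℓ_nonneg x) (by linarith) (by linarith)

theorem one_sub_sq_mul_u'_sq (hx : x ∈ Ioo (-1 : ℝ) 1) :
    (1 - x ^ 2) * u' β x ^ 2 = 2 * β ^ 2 * (x * ℓ x ^ (2 * β - 2)) * (2 * x / (1 - x ^ 2)) := by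
  by_cases hx0 : x = 0
  · simp [u', hx0]
  have hℓ : (ℓ x ^ (β - 1)) ^ 2 = ℓ x ^ (2 * β - 2) := by
    rw [← Real.rpow_mul_natCast (ℓ_nonneg x)]
    ring_nf
  have hD := (one_sub_sq_pos hx).ne'
  rw [u', if_neg hx0, mul_pow, mul_pow, hℓ]
  field_simp

theorem intervalIntegrable_one_sub_sq_mul_u'_sq_of_le {a b s : ℝ} (hab : a ≤ b) (ha : 0 ≤ a)
    (hb : b ≤ 1) (hs : s ≠ 0) (hcont : ContinuousOn (fun x => ℓ x ^ s) (Icc a b))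
    (hle : ∀ x ∈ Ioo a b, x * ℓ x ^ (2 * β - 2) ≤ ℓ x ^ (s - 1)) :
    IntervalIntegrable (fun x => (1 - x ^ 2) * u' β x ^ 2) volume a b := by
  have hI : ∀ x ∈ Ioo a b, x ∈ Ioo (-1 : ℝ) 1 := fun x hx =>
    ⟨by linarith [hx.1], hx.2.trans_le hb⟩
  refine intervalIntegrable_of_norm_le_deriv hab
    (((measurable_const.sub (measurable_id.pow_const 2)).mul
      (measurable_u'.pow_const 2)).aestronglyMeasurable)
    ((hcont.div_const s).const_mul (2 * β ^ 2))
    (g' := fun x => 2 * β ^ 2 * ℓ x ^ (s - 1) * (2 * x / (1 - x ^ 2))) (fun x hx => ?_)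
    fun x hx => ?_
  · have hx0 : x ≠ 0 := (ha.trans_lt hx.1).ne'
    exact (((hasDerivAt_ℓ_rpow s (hI x hx) hx0).div_const s).const_mul (2 * β ^ 2)).congr_deriv
      (by field_simp)
  · have hD := one_sub_sq_pos (hI x hx)
    rw [Real.norm_of_nonneg (mul_nonneg hD.le (sq_nonneg _)), one_sub_sq_mul_u'_sq (hI x hx)]
    exact mul_le_mul_of_nonneg_right (mul_le_mul_of_nonneg_left (hle x hx) (by positivity))
      (div_nonneg (by linarith [hx.1]) hD.le)

theorem intervalIntegrable_one_sub_sq_mul_u'_sq_zero_half (hβ : 1 / 4 < β) :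
    IntervalIntegrable (fun x => (1 - x ^ 2) * u' β x ^ 2) volume 0 (1 / 2) := by
  refine intervalIntegrable_one_sub_sq_mul_u'_sq_of_le (s := 2 * β - 1 / 2) (by norm_num) le_rfl
    (by norm_num) (by linarith)
    ((continuousOn_ℓ.mono ?_).rpow_const fun _ _ => Or.inr (by linarith)) fun x hx => ?_
  · exact Icc_subset_Ioo (by norm_num) (by norm_num)
  · have hxI : x ∈ Ioo (-1 : ℝ) 1 := ⟨by linarith [hx.1], by linarith [hx.2]⟩
    have hℓ := ℓ_pos hxI hx.1.ne'
    have hx_le : x ≤ ℓ x ^ (1 / 2 : ℝ) := by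
      rw [← Real.sqrt_eq_rpow]
      exact (Real.le_sqrt hx.1.le hℓ.le).2 (sq_le_ℓ hxI)
    calc x * ℓ x ^ (2 * β - 2) ≤ ℓ x ^ (1 / 2 : ℝ) * ℓ x ^ (2 * β - 2) :=
          mul_le_mul_of_nonneg_right hx_le (Real.rpow_nonneg hℓ.le _)
      _ = ℓ x ^ (2 * β - 1 / 2 - 1) := by rw [← Real.rpow_add hℓ]; ring_nf

theorem intervalIntegrable_one_sub_sq_mul_u'_sq_half_one (hβ : β < 1 / 2) :
    IntervalIntegrable (fun x => (1 - x ^ 2) * u' β x ^ 2) volume (1 / 2) 1 := by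
  refine intervalIntegrable_one_sub_sq_mul_u'_sq_of_le (s := 2 * β - 1) (by norm_num) (by norm_num)
    le_rfl (by linarith) (continuousOn_ℓ_rpow_of_neg (by norm_num) (by linarith)) fun x hx => ?_
  rw [show 2 * β - 1 - 1 = 2 * β - 2 by ring]
  exact mul_le_of_le_one_left (Real.rpow_nonneg (ℓ_nonneg x) _) hx.2.le

theorem integrableOn_one_sub_sq_mul_u'_sq (hβ : β ∈ Ioo (1 / 4 : ℝ) (1 / 2)) :
    IntegrableOn (fun x => (1 - x ^ 2) * u' β x ^ 2) (Ioo (-1 : ℝ) 1) := by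
  have heven : ∀ x : ℝ, (1 - (-x) ^ 2) * u' β (-x) ^ 2 = (1 - x ^ 2) * u' β x ^ 2 := fun x => by
    rw [u'_neg, neg_sq, neg_sq]
  rw [← intervalIntegrable_iff_integrableOn_Ioo_of_le (by norm_num)]
  exact intervalIntegrable_of_even heven
    ((intervalIntegrable_one_sub_sq_mul_u'_sq_zero_half hβ.1).trans
      (intervalIntegrable_one_sub_sq_mul_u'_sq_half_one hβ.2))

theorem memV_u (hβ : β ∈ Ioo (1 / 4 : ℝ) (1 / 2)) : MemV (u β) (u' β) := by
  have hβ0 : 0 ≤ β := by linarith [hβ.1]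
  exact ⟨integrableOn_u_sq hβ0 hβ.2.le, fun _ _ => u_sub_u_eq_integral hβ0,
    fun _ _ => intervalIntegrable_u' hβ0, integrableOn_one_sub_sq_mul_u'_sq hβ⟩

theorem tendsto_u_nhdsLT_one (hβ : 0 < β) : Tendsto (u β) (𝓝[<] 1) atTop :=
  (tendsto_rpow_atTop hβ).comp tendsto_ℓ_nhdsLT_one

theorem tendsto_u_nhdsGT_neg_one (hβ : 0 < β) : Tendsto (u β) (𝓝[>] (-1)) atTop := by
  refine ((tendsto_u_nhdsLT_one hβ).comp tendsto_neg_nhdsGT_neg).congr fun x => ?_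
  simp only [Function.comp_apply, u, ℓ_neg]

theorem not_bddAbove_u (hβ : 0 < β) : ¬ BddAbove (u β '' Ioo (-1 : ℝ) 1) := by
  rintro ⟨C, hC⟩
  obtain ⟨x, hxC, hxI⟩ := (((tendsto_u_nhdsLT_one hβ).eventually_gt_atTop C).and
    (Ioo_mem_nhdsLT (by norm_num : (-1 : ℝ) < 1))).exists
  exact (hC (mem_image_of_mem _ hxI)).not_gt hxC

end u

end UnboundedInV

open UnboundedInV in
/-- An unbounded function in `V`: for `β ∈ (1/4, 1/2)`, the function
`u(x) = |log(1-x²)|^β` belongs to `V` (with the natural a.e. derivative) and tends to `+∞`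
as `x → 1⁻` and as `x → (-1)⁺`; in particular it is not bounded on `(-1,1)`, so `V` is not
contained in `L^∞(-1,1)`. -/
theorem unbounded_function_in_V (β : ℝ) (hβ : β ∈ Ioo (1/4 : ℝ) (1/2)) :
    MemV (fun x => |Real.log (1 - x ^ 2)| ^ β)
      (fun x => if x = 0 then 0
        else β * |Real.log (1 - x ^ 2)| ^ (β - 1) * (2 * x / (1 - x ^ 2))) ∧
    Tendsto (fun x : ℝ => |Real.log (1 - x ^ 2)| ^ β)
      (nhdsWithin 1 (Iio (1:ℝ))) atTop ∧
    Tendsto (fun x : ℝ => |Real.log (1 - x ^ 2)| ^ β)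
      (nhdsWithin (-1) (Ioi (-1:ℝ))) atTop ∧
    ¬ ∃ C : ℝ, ∀ x ∈ Ioo (-1:ℝ) 1, |Real.log (1 - x ^ 2)| ^ β ≤ C := by
  have hβ0 : 0 < β := by linarith [hβ.1]
  exact ⟨memV_u hβ, tendsto_u_nhdsLT_one hβ0, tendsto_u_nhdsGT_neg_one hβ0,
    fun ⟨C, hC⟩ => not_bddAbove_u hβ0 ⟨C, forall_mem_image.2 hC⟩⟩
end
end
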